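/- Let (X,d) be a complete Busemann convex geodesic space that is additionally δ-hyperbolic, and let A ⊆ X be closed and convex. If A contains a (λ,ε)-quasi-geodesic ray for some λ ≥ 1 and ε ≥ 0, then A contains a geodesic ray. -/

import Mathlib

open Set Filter Metric

section Defs

variable {X : Type*} [MetricSpace X]

/-- A unit-speed geodesic defined on `[a, b]`. -/
def IsGeodesicOn (γ : ℝ → X) (a b : ℝ) : Prop :=
  ∀ s ∈ Set.Icc a b, ∀ t ∈ Set.Icc a b, dist (γ s) (γ t) = |s - t|

/-- `S` is a geodesic segment joining `x` and `y`. -/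
def IsGeodesicSegment (S : Set X) (x y : X) : Prop :=
  ∃ (a b : ℝ) (γ : ℝ → X), a ≤ b ∧ IsGeodesicOn γ a b ∧ γ a = x ∧ γ b = y ∧
    S = γ '' Set.Icc a b

/-- A geodesic space: every two points are joined by a geodesic segment. -/
def GeodesicSpace (X : Type*) [MetricSpace X] : Prop :=
  ∀ x y : X, ∃ S : Set X, IsGeodesicSegment S x y

/-- A uniquely geodesic space. -/
def UniquelyGeodesic (X : Type*) [MetricSpace X] : Prop :=
  ∀ x y : X, ∃! S : Set X, IsGeodesicSegment S x y

/-- `S` is contained in the closed `M`-neighborhood of `T`. -/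
def InClosedNbhd (S T : Set X) (M : ℝ) : Prop :=
  ∀ p ∈ S, ∃ q ∈ T, dist p q ≤ M

/-- A triangle with sides `S1, S2, S3` is `M`-slim. -/
def SlimTriangle (S1 S2 S3 : Set X) (M : ℝ) : Prop :=
  InClosedNbhd S1 (S2 ∪ S3) M ∧ InClosedNbhd S2 (S1 ∪ S3) M ∧ InClosedNbhd S3 (S1 ∪ S2) M

/-- `X` is `δ`-hyperbolic: every geodesic triangle is `δ`-slim. -/
def DeltaHyperbolic (X : Type*) [MetricSpace X] (δ : ℝ) : Prop :=
  ∀ x y z : X, ∀ S1 S2 S3 : Set X,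
    IsGeodesicSegment S1 x y → IsGeodesicSegment S2 y z → IsGeodesicSegment S3 z x →
    SlimTriangle S1 S2 S3 δ

/-- A geodesic ray `γ : [0, ∞) → X`. -/
def IsGeodesicRay (γ : ℝ → X) : Prop :=
  ∀ s ∈ Set.Ici (0:ℝ), ∀ t ∈ Set.Ici (0:ℝ), dist (γ s) (γ t) = |s - t|

/-- A set is geodesically bounded if it contains no geodesic ray. -/
def GeodesicallyBounded (A : Set X) : Prop :=
  ¬ ∃ γ : ℝ → X, IsGeodesicRay γ ∧ ∀ t ∈ Set.Ici (0:ℝ), γ t ∈ A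

/-- A directional curve `γ : [0, ∞) → X` (with some constant `b ≥ 0`). -/
def IsDirectionalCurve (γ : ℝ → X) : Prop :=
  ∃ b : ℝ, 0 ≤ b ∧ ∀ s ∈ Set.Ici (0:ℝ), ∀ t ∈ Set.Ici (0:ℝ),
    |s - t| - b ≤ dist (γ s) (γ t) ∧ dist (γ s) (γ t) ≤ |s - t|

/-- A set is directionally bounded if it contains no directional curve. -/
def DirectionallyBounded (A : Set X) : Prop :=
  ¬ ∃ γ : ℝ → X, IsDirectionalCurve γ ∧ ∀ t ∈ Set.Ici (0:ℝ), γ t ∈ A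

/-- A subset of a geodesic space is convex if every geodesic segment joining two of its
points is contained in it. -/
def GeodesicConvex (A : Set X) : Prop :=
  ∀ x ∈ A, ∀ y ∈ A, ∀ S : Set X, IsGeodesicSegment S x y → S ⊆ A

/-- The comparison point in the Euclidean plane: the point on the segment from `x'` to `y'`
(of length `L`) at distance `t` from `x'`. -/
noncomputable def cmpPt (x' y' : EuclideanSpace ℝ (Fin 2)) (L t : ℝ) :
    EuclideanSpace ℝ (Fin 2) :=
  AffineMap.lineMap x' y' (t / L)

/-- `X` is a CAT(0) space: it is geodesic and for every geodesic triangle and every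
comparison triangle in the Euclidean plane, distances between points on the triangle are
bounded by the distances between the corresponding comparison points. -/
def CAT0Space (X : Type*) [MetricSpace X] : Prop :=
  GeodesicSpace X ∧
  ∀ (x y z : X) (γ1 γ2 γ3 : ℝ → X),
    IsGeodesicOn γ1 0 (dist x y) → γ1 0 = x → γ1 (dist x y) = y →
    IsGeodesicOn γ2 0 (dist y z) → γ2 0 = y → γ2 (dist y z) = z →
    IsGeodesicOn γ3 0 (dist z x) → γ3 0 = z → γ3 (dist z x) = x →
    ∀ x' y' z' : EuclideanSpace ℝ (Fin 2),
      dist x' y' = dist x y → dist y' z' = dist y z → dist z' x' = dist z x →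
      (∀ s ∈ Set.Icc (0:ℝ) (dist x y), ∀ t ∈ Set.Icc (0:ℝ) (dist y z),
        dist (γ1 s) (γ2 t) ≤ dist (cmpPt x' y' (dist x y) s) (cmpPt y' z' (dist y z) t)) ∧
      (∀ s ∈ Set.Icc (0:ℝ) (dist y z), ∀ t ∈ Set.Icc (0:ℝ) (dist z x),
        dist (γ2 s) (γ3 t) ≤ dist (cmpPt y' z' (dist y z) s) (cmpPt z' x' (dist z x) t)) ∧
      (∀ s ∈ Set.Icc (0:ℝ) (dist z x), ∀ t ∈ Set.Icc (0:ℝ) (dist x y),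
        dist (γ3 s) (γ1 t) ≤ dist (cmpPt z' x' (dist z x) s) (cmpPt x' y' (dist x y) t))

/-- Busemann convexity. -/
def BusemannConvex (X : Type*) [MetricSpace X] : Prop :=
  GeodesicSpace X ∧
  ∀ (a b c d : ℝ) (γ σ : ℝ → X), a ≤ b → c ≤ d →
    IsGeodesicOn γ a b → IsGeodesicOn σ c d →
    ∀ t ∈ Set.Icc (0:ℝ) 1,
      dist (γ ((1-t)*a + t*b)) (σ ((1-t)*c + t*d)) ≤
        (1-t) * dist (γ a) (σ c) + t * dist (γ b) (σ d)

/-- A `(lam, eps)`-quasi-geodesic defined on `[a, b]`. -/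
def IsQuasiGeodesicOn (lam eps : ℝ) (γ : ℝ → X) (a b : ℝ) : Prop :=
  ∀ s ∈ Set.Icc a b, ∀ t ∈ Set.Icc a b,
    (1/lam) * |s - t| - eps ≤ dist (γ s) (γ t) ∧ dist (γ s) (γ t) ≤ lam * |s - t| + eps

/-- A `(lam, eps)`-quasi-geodesic ray. -/
def IsQuasiGeodesicRay (lam eps : ℝ) (γ : ℝ → X) : Prop :=
  ∀ s ∈ Set.Ici (0:ℝ), ∀ t ∈ Set.Ici (0:ℝ),
    (1/lam) * |s - t| - eps ≤ dist (γ s) (γ t) ∧ dist (γ s) (γ t) ≤ lam * |s - t| + eps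

/-- A `k`-local `lam`-quasi-geodesic ray: a `(lam, eps)`-quasi-geodesic ray locally,
for every `eps > 0`. -/
def IsLocalQuasiGeodesicRay (k lam : ℝ) (γ : ℝ → X) : Prop :=
  ∀ eps > (0:ℝ), ∀ s ∈ Set.Ici (0:ℝ), ∀ t ∈ Set.Ici (0:ℝ), |s - t| ≤ k →
    (1/lam) * |s - t| - eps ≤ dist (γ s) (γ t) ∧ dist (γ s) (γ t) ≤ lam * |s - t| + eps

/-- `S` is the image of a `lam`-quasi-geodesic joining `x` and `y`
(i.e. a `(lam, eps)`-quasi-geodesic for every `eps > 0`). -/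
def IsQuasiGeodesicSegment (lam : ℝ) (S : Set X) (x y : X) : Prop :=
  ∃ (a b : ℝ) (γ : ℝ → X), a ≤ b ∧ (∀ eps > (0:ℝ), IsQuasiGeodesicOn lam eps γ a b) ∧
    γ a = x ∧ γ b = y ∧ S = γ '' Set.Icc a b

/-- Every `lam`-quasi-geodesic triangle in `X` is `M`-slim. -/
def QuasiGeodesicTrianglesSlim (X : Type*) [MetricSpace X] (lam M : ℝ) : Prop :=
  ∀ x y z : X, ∀ S1 S2 S3 : Set X,
    IsQuasiGeodesicSegment lam S1 x y → IsQuasiGeodesicSegment lam S2 y z →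
    IsQuasiGeodesicSegment lam S3 z x → SlimTriangle S1 S2 S3 M

/-- A play of the Lion-Man game in `A` with speed `D`. -/
def IsLionManPlay (A : Set X) (D : ℝ) (L M : ℕ → X) : Prop :=
  (∀ n, L n ∈ A) ∧ (∀ n, M n ∈ A) ∧
  (∀ n, ∃ S : Set X, IsGeodesicSegment S (L n) (M n) ∧ L (n+1) ∈ S) ∧
  (∀ n, dist (L n) (L (n+1)) = min D (dist (L n) (M n))) ∧
  (∀ n, dist (M n) (M (n+1)) ≤ D)

/-- The lion wins a play if `d(L_{n+1}, M_n) → 0`. -/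
def LionWins (L M : ℕ → X) : Prop :=
  Filter.Tendsto (fun n => dist (L (n+1)) (M n)) Filter.atTop (nhds 0)

/-- The lion always wins the Lion-Man game played in `A`. -/
def LionAlwaysWins (A : Set X) : Prop :=
  ∀ D > (0:ℝ), ∀ L M : ℕ → X, IsLionManPlay A D L M → LionWins L M

end Defs

/-!
Fix the base point `p = γ 0`, the ratio `ρ = 1 + 1/λ²` and times `r i = 4λ T i` with
`T i = K ρ^i`, and let `c i` be a geodesic from `p` to `γ (r i)`; it lies in `A` by convexity.
The Gromov product of `γ (r i)` and `γ (r (i+1))` at `p` is at least `2 T i - 3ε/2`, so by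
`δ`-hyperbolicity `c i` and `c (i+1)` are `2δ`-close at time `T i`, and Busemann convexity
spreads this linearly back to `p`: `d(c i s, c (i+1) s) ≤ 2δ s / T i`. This is geometric in `i`, so `c i s`
converges; the limit is a geodesic ray, and it lies in `A` because `A` is closed.
-/

section Geodesics

variable {X : Type*} [MetricSpace X]

lemma IsGeodesicOn.mono {γ : ℝ → X} {a b c d : ℝ} (h : IsGeodesicOn γ a b) (hca : a ≤ c)
    (hdb : d ≤ b) : IsGeodesicOn γ c d :=
  fun s hs t ht ↦ h s ⟨hca.trans hs.1, hs.2.trans hdb⟩ t ⟨hca.trans ht.1, ht.2.trans hdb⟩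

lemma IsGeodesicOn.dist_apply_zero {γ : ℝ → X} {L t : ℝ} (h : IsGeodesicOn γ 0 L)
    (ht : t ∈ Icc 0 L) : dist (γ 0) (γ t) = t := by
  rw [h 0 ⟨le_rfl, ht.1.trans ht.2⟩ t ht, zero_sub, abs_neg, abs_of_nonneg ht.1]

lemma IsGeodesicOn.isGeodesicSegment {γ : ℝ → X} {a b : ℝ} (h : IsGeodesicOn γ a b)
    (hab : a ≤ b) : IsGeodesicSegment (γ '' Icc a b) (γ a) (γ b) :=
  ⟨a, b, γ, hab, h, rfl, rfl, rfl⟩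

lemma IsGeodesicSegment.exists_isGeodesicOn_zero {S : Set X} {x y : X}
    (h : IsGeodesicSegment S x y) :
    ∃ γ : ℝ → X, IsGeodesicOn γ 0 (dist x y) ∧ γ 0 = x ∧ γ (dist x y) = y ∧
      γ '' Icc 0 (dist x y) = S := by
  obtain ⟨a, b, γ, hab, hγ, rfl, rfl, rfl⟩ := h
  have hL : dist (γ a) (γ b) = b - a := by
    rw [hγ a ⟨le_rfl, hab⟩ b ⟨hab, le_rfl⟩, abs_sub_comm, abs_of_nonneg (sub_nonneg.2 hab)]
  refine ⟨fun t ↦ γ (a + t), fun s hs t ht ↦ ?_, by simp, by simp [hL], ?_⟩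
  · rw [hL] at hs ht
    rw [hγ (a + s) ⟨by linarith [hs.1], by linarith [hs.2]⟩
      (a + t) ⟨by linarith [ht.1], by linarith [ht.2]⟩, add_sub_add_left_eq_sub]
  · rw [hL, ← image_image γ (a + ·), image_const_add_Icc, add_zero, add_sub_cancel]

lemma IsGeodesicSegment.symm {S : Set X} {x y : X} (h : IsGeodesicSegment S x y) :
    IsGeodesicSegment S y x := by
  obtain ⟨a, b, γ, hab, hγ, rfl, rfl, rfl⟩ := h
  refine ⟨-b, -a, fun t ↦ γ (-t), neg_le_neg hab, fun s hs t ht ↦ ?_, by simp, by simp, ?_⟩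
  · rw [hγ (-s) ⟨le_neg.1 hs.2, neg_le.1 hs.1⟩ (-t) ⟨le_neg.1 ht.2, neg_le.1 ht.1⟩,
      neg_sub_neg, abs_sub_comm]
  · rw [← image_image γ Neg.neg, image_neg_Icc, neg_neg, neg_neg]

lemma IsGeodesicSegment.dist_add_dist_of_mem {S : Set X} {x y q : X}
    (h : IsGeodesicSegment S x y) (hq : q ∈ S) : dist x q + dist q y = dist x y := by
  obtain ⟨a, b, γ, hab, hγ, rfl, rfl, rfl⟩ := h
  obtain ⟨u, hu, rfl⟩ := hq
  rw [hγ a ⟨le_rfl, hab⟩ u hu, hγ u hu b ⟨hab, le_rfl⟩, hγ a ⟨le_rfl, hab⟩ b ⟨hab, le_rfl⟩,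
    abs_sub_comm a u, abs_sub_comm u b, abs_sub_comm a b, abs_of_nonneg (sub_nonneg.2 hu.1),
    abs_of_nonneg (sub_nonneg.2 hu.2), abs_of_nonneg (sub_nonneg.2 hab)]
  ring

lemma GeodesicSpace.exists_isGeodesicOn_subset (hgeo : GeodesicSpace X) {A : Set X}
    (hA : GeodesicConvex A) {x y : X} (hx : x ∈ A) (hy : y ∈ A) :
    ∃ γ : ℝ → X, IsGeodesicOn γ 0 (dist x y) ∧ γ 0 = x ∧ γ (dist x y) = y ∧
      γ '' Icc 0 (dist x y) ⊆ A := by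
  obtain ⟨S, hS⟩ := hgeo x y
  obtain ⟨γ, hγ, h0, h1, rfl⟩ := hS.exists_isGeodesicOn_zero
  exact ⟨γ, hγ, h0, h1, hA x hx y hy _ hS⟩

end Geodesics

section GromovProduct

variable {X : Type*} [MetricSpace X]

noncomputable def gromovProduct (p y z : X) : ℝ :=
  (dist p y + dist p z - dist y z) / 2

lemma gromovProduct_le_dist_left (p y z : X) : gromovProduct p y z ≤ dist p y := by
  unfold gromovProduct
  linarith [dist_triangle p y z]

lemma gromovProduct_le_dist_right (p y z : X) : gromovProduct p y z ≤ dist p z := by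
  unfold gromovProduct
  linarith [dist_triangle p z y, dist_comm y z]

lemma IsGeodesicSegment.gromovProduct_le_dist {S : Set X} {y z q : X}
    (h : IsGeodesicSegment S y z) (hq : q ∈ S) (p : X) : gromovProduct p y z ≤ dist p q := by
  unfold gromovProduct
  linarith [h.dist_add_dist_of_mem hq, dist_triangle p q y, dist_triangle p q z, dist_comm y q]

end GromovProduct

lemma DeltaHyperbolic.dist_le_two_mul_of_lt_gromovProduct {X : Type*} [MetricSpace X] {δ : ℝ}
    (hhyp : DeltaHyperbolic X δ) (hgeo : GeodesicSpace X) (hδ : 0 ≤ δ) {p y z : X}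
    {c c' : ℝ → X} (hc : IsGeodesicOn c 0 (dist p y)) (hc0 : c 0 = p)
    (hcy : c (dist p y) = y) (hc' : IsGeodesicOn c' 0 (dist p z)) (hc'0 : c' 0 = p)
    (hc'z : c' (dist p z) = z) {T : ℝ} (hT0 : 0 ≤ T) (hT : T + δ < gromovProduct p y z) :
    dist (c T) (c' T) ≤ 2 * δ := by
  have hTy : T ∈ Icc 0 (dist p y) := ⟨hT0, by linarith [gromovProduct_le_dist_left p y z]⟩
  have hTz : T ∈ Icc 0 (dist p z) := ⟨hT0, by linarith [gromovProduct_le_dist_right p y z]⟩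
  have hside₁ := hc.isGeodesicSegment dist_nonneg
  have hside₃ := (hc'.isGeodesicSegment dist_nonneg).symm
  rw [hc0, hcy] at hside₁
  rw [hc'0, hc'z] at hside₃
  obtain ⟨S, hside₂⟩ := hgeo y z
  obtain ⟨q, hq, hcq⟩ := (hhyp p y z _ S _ hside₁ hside₂ hside₃).1 (c T) ⟨T, hTy, rfl⟩
  have hpcT : dist p (c T) = T := hc0 ▸ hc.dist_apply_zero hTy
  rcases hq with hqS | ⟨u, hu, rfl⟩
  · linarith [hside₂.gromovProduct_le_dist hqS p, dist_triangle p (c T) q]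
  · have hpu : dist p (c' u) = u := hc'0 ▸ hc'.dist_apply_zero hu
    have hut : |u - T| ≤ δ := by
      have := abs_dist_sub_le (c' u) (c T) p
      rw [dist_comm _ p, dist_comm _ p, hpu, hpcT, dist_comm] at this
      exact this.trans hcq
    calc dist (c T) (c' T) ≤ dist (c T) (c' u) + dist (c' u) (c' T) := dist_triangle _ _ _
      _ ≤ δ + δ := by rw [hc' u hu T hTz]; exact add_le_add hcq hut
      _ = 2 * δ := by ring

lemma BusemannConvex.dist_le_div_mul {X : Type*} [MetricSpace X] (hB : BusemannConvex X)
    {c c' : ℝ → X} {T s : ℝ} (hc : IsGeodesicOn c 0 T) (hc' : IsGeodesicOn c' 0 T)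
    (h0 : c 0 = c' 0) (hs : s ∈ Icc 0 T) :
    dist (c s) (c' s) ≤ s / T * dist (c T) (c' T) := by
  rcases (hs.1.trans hs.2).eq_or_lt with rfl | hT
  · obtain rfl : s = 0 := le_antisymm hs.2 hs.1
    simp [h0]
  have ht : s / T ∈ Icc (0 : ℝ) 1 := ⟨div_nonneg hs.1 hT.le, (div_le_one hT).2 hs.2⟩
  have hB' := hB.2 0 T 0 T c c' hT.le hT.le hc hc' (s / T) ht
  rwa [mul_zero, zero_add, div_mul_cancel₀ s hT.ne', h0, dist_self, mul_zero, zero_add] at hB'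

lemma BusemannConvex.dist_le_of_lt_gromovProduct {X : Type*} [MetricSpace X]
    (hB : BusemannConvex X) {δ : ℝ} (hhyp : DeltaHyperbolic X δ) (hδ : 0 ≤ δ) {p y z : X}
    {c c' : ℝ → X} (hc : IsGeodesicOn c 0 (dist p y)) (hc0 : c 0 = p)
    (hcy : c (dist p y) = y) (hc' : IsGeodesicOn c' 0 (dist p z)) (hc'0 : c' 0 = p)
    (hc'z : c' (dist p z) = z) {T s : ℝ} (hT : T + δ < gromovProduct p y z)
    (hs : s ∈ Icc 0 T) : dist (c s) (c' s) ≤ 2 * δ * s / T := by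
  have hT0 : 0 ≤ T := hs.1.trans hs.2
  have hTy : T ≤ dist p y := by linarith [gromovProduct_le_dist_left p y z]
  have hTz : T ≤ dist p z := by linarith [gromovProduct_le_dist_right p y z]
  calc dist (c s) (c' s)
      ≤ s / T * dist (c T) (c' T) :=
        hB.dist_le_div_mul (hc.mono le_rfl hTy) (hc'.mono le_rfl hTz) (hc0.trans hc'0.symm) hs
    _ ≤ s / T * (2 * δ) := mul_le_mul_of_nonneg_left
        (hhyp.dist_le_two_mul_of_lt_gromovProduct hB.1 hδ hc hc0 hcy hc' hc'0 hc'z hT0 hT)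
        (div_nonneg hs.1 hT0)
    _ = 2 * δ * s / T := by ring

section QuasiGeodesic

variable {X : Type*} [MetricSpace X] {lam eps : ℝ} {γ : ℝ → X}

lemma IsQuasiGeodesicRay.le_dist_zero (hγ : IsQuasiGeodesicRay lam eps γ) {s : ℝ}
    (hs : 0 ≤ s) : s / lam - eps ≤ dist (γ 0) (γ s) := by
  have := (hγ 0 self_mem_Ici s hs).1
  rwa [zero_sub, abs_neg, abs_of_nonneg hs, one_div_mul_eq_div] at this

/-- The ratio `1 + 1/λ²` is chosen so that the upper quasi-geodesic bound `λ · r/λ² + ε` on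
the gap cancels a lower bound `r/λ - ε` on the distance to `γ 0`. -/
lemma IsQuasiGeodesicRay.le_gromovProduct (hγ : IsQuasiGeodesicRay lam eps γ) (hlam : 0 < lam)
    {r : ℝ} (hr : 0 ≤ r) :
    r / (2 * lam) - 3 * eps / 2 ≤ gromovProduct (γ 0) (γ r) (γ ((1 + 1 / lam ^ 2) * r)) := by
  have hr' : r ≤ (1 + 1 / lam ^ 2) * r := le_mul_of_one_le_left hr (le_add_of_nonneg_right (by positivity))
  have hgap : lam * |r - (1 + 1 / lam ^ 2) * r| = r / lam := by
    rw [abs_sub_comm, abs_of_nonneg (sub_nonneg.2 hr')]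
    field_simp
    ring
  have hmono : r / lam ≤ (1 + 1 / lam ^ 2) * r / lam := div_le_div_of_nonneg_right hr' hlam.le
  have hside := (hγ r hr _ (hr.trans hr')).2
  have hnear := hγ.le_dist_zero hr
  have hfar := hγ.le_dist_zero (hr.trans hr')
  have hhalf : r / (2 * lam) = r / lam / 2 := by ring
  unfold gromovProduct
  linarith

end QuasiGeodesic

lemma cauchySeq_of_eventually_le_geometric {α : Type*} [PseudoMetricSpace α] {u : ℕ → α}
    {C q : ℝ} (hq : q < 1) (h : ∀ᶠ n in atTop, dist (u n) (u (n + 1)) ≤ C * q ^ n) :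
    CauchySeq u := by
  obtain ⟨N, hN⟩ := eventually_atTop.1 h
  rw [← cauchySeq_shift N]
  refine cauchySeq_of_le_geometric q (C * q ^ N) hq fun n ↦ ?_
  rw [mul_assoc, ← pow_add, add_comm N n, add_right_comm]
  exact hN (n + N) (Nat.le_add_left N n)

lemma exists_isGeodesicRay_of_cauchySeq {X : Type*} [MetricSpace X] [CompleteSpace X]
    {A : Set X} (hA : IsClosed A) {c : ℕ → ℝ → X} {L : ℕ → ℝ} (hL : Tendsto L atTop atTop)
    (hc : ∀ i, IsGeodesicOn (c i) 0 (L i)) (hcA : ∀ i, c i '' Icc 0 (L i) ⊆ A)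
    (hcauchy : ∀ s, 0 ≤ s → CauchySeq fun i ↦ c i s) :
    ∃ σ : ℝ → X, IsGeodesicRay σ ∧ ∀ t ∈ Ici (0 : ℝ), σ t ∈ A := by
  have : Nonempty X := ⟨c 0 0⟩
  have hlim (s : ℝ) (hs : 0 ≤ s) :
      Tendsto (fun i ↦ c i s) atTop (nhds (limUnder atTop fun i ↦ c i s)) :=
    (hcauchy s hs).tendsto_limUnder
  refine ⟨fun s ↦ limUnder atTop fun i ↦ c i s, fun s hs t ht ↦ ?_, fun t ht ↦ ?_⟩
  · have hgeod : ∀ᶠ i in atTop, |s - t| = dist (c i s) (c i t) :=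
      (hL.eventually_ge_atTop (max s t)).mono fun i hi ↦
        (hc i s ⟨hs, (le_max_left s t).trans hi⟩ t ⟨ht, (le_max_right s t).trans hi⟩).symm
    exact tendsto_nhds_unique ((hlim s hs).dist (hlim t ht))
      (tendsto_const_nhds.congr' hgeod)
  · exact hA.mem_of_tendsto (hlim t ht)
      ((hL.eventually_ge_atTop t).mono fun i hi ↦ hcA i ⟨t, ⟨ht, hi⟩, rfl⟩)

theorem stmt5 {X : Type*} [MetricSpace X] [CompleteSpace X]
    (hB : BusemannConvex X) (δ : ℝ) (hδ : 0 ≤ δ) (hhyp : DeltaHyperbolic X δ)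
    (A : Set X) (hclosed : IsClosed A) (hconv : GeodesicConvex A)
    (lam eps : ℝ) (hlam : 1 ≤ lam) (heps : 0 ≤ eps)
    (γ : ℝ → X) (hγ : IsQuasiGeodesicRay lam eps γ)
    (hγA : ∀ t ∈ Set.Ici (0:ℝ), γ t ∈ A) :
    ∃ σ : ℝ → X, IsGeodesicRay σ ∧ ∀ t ∈ Set.Ici (0:ℝ), σ t ∈ A := by
  have hlam0 : 0 < lam := one_pos.trans_le hlam
  set ρ := 1 + 1 / lam ^ 2
  have hρ : 1 < ρ := lt_add_of_pos_right 1 (by positivity)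
  set K := 3 * eps / 2 + δ + 1 with hK_def
  have hK : 0 < K := by positivity
  set T : ℕ → ℝ := fun i ↦ K * ρ ^ i
  set r : ℕ → ℝ := fun i ↦ 4 * lam * T i
  have hT_top : Tendsto T atTop atTop :=
    (tendsto_pow_atTop_atTop_of_one_lt hρ).const_mul_atTop hK
  have hr0 (i : ℕ) : 0 ≤ r i := by positivity
  choose c hc hc0 hcr hcA using fun i ↦
    hB.1.exists_isGeodesicOn_subset hconv (hγA 0 self_mem_Ici) (hγA (r i) (hr0 i))
  have hstep (i : ℕ) (s : ℝ) (hs : s ∈ Icc 0 (T i)) :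
      dist (c i s) (c (i + 1) s) ≤ 2 * δ / K * s * ρ⁻¹ ^ i := by
    have hT : T i + δ < gromovProduct (γ 0) (γ (r i)) (γ (r (i + 1))) := by
      have hr : r (i + 1) = ρ * r i := by simp only [r, T]; ring
      have : r i / (2 * lam) = 2 * T i := by simp only [r]; field_simp; ring
      have hKT : K ≤ T i := le_mul_of_one_le_right hK.le (one_le_pow₀ hρ.le)
      rw [hr]
      linarith [hγ.le_gromovProduct hlam0 (hr0 i)]
    calc dist (c i s) (c (i + 1) s) ≤ 2 * δ * s / T i :=
          hB.dist_le_of_lt_gromovProduct hhyp hδ (hc i) (hc0 i) (hcr i) (hc (i + 1))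
            (hc0 (i + 1)) (hcr (i + 1)) hT hs
      _ = 2 * δ / K * s * ρ⁻¹ ^ i := by simp only [T, inv_pow]; field_simp
  refine exists_isGeodesicRay_of_cauchySeq hclosed ?_ hc hcA fun s hs ↦
    cauchySeq_of_eventually_le_geometric (C := 2 * δ / K * s) (inv_lt_one_of_one_lt₀ hρ) ?_
  · exact tendsto_atTop_mono (fun i ↦ hγ.le_dist_zero (hr0 i)) (tendsto_atTop_add_const_right _ _
      ((hT_top.const_mul_atTop (by positivity)).atTop_div_const hlam0))
  · filter_upwards [hT_top.eventually_ge_atTop s] with i hi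
    exact hstep i s ⟨hs, hi⟩
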